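/- Let m₁, m₂, m₃, m be positive integers and let f : F₂^{m₁} × F₂^{m₂} × F₂^{m₃} → F₂^m be a vectorial Boolean function. Then for every a ∈ F₂^{m₁}, every c ∈ F₂^{m₃} and every b ∈ F₂^m with b ≠ 0, one has Σ_{x₂ ∈ F₂^{m₂}} cor_{x₁,x₃}²(a·x₁ ⊕ c·x₃ ⊕ b·f(x₁,x₂,x₃)) = 2^{m₂} · Σ_{d ∈ F₂^{m₂}} cor_{x₁,x₂,x₃}²(a·x₁ ⊕ d·x₂ ⊕ c·x₃ ⊕ b·f(x₁,x₂,x₃)), where cor_{x₁,x₃} denotes the correlation taken with x₂ fixed and (x₁,x₃) uniform on F₂^{m₁} × F₂^{m₃}, and cor_{x₁,x₂,x₃} denotes the correlation with (x₁,x₂,x₃) uniform on F₂^{m₁} × F₂^{m₂} × F₂^{m₃}. -/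

import Mathlib

/-- The correlation of a Boolean function `g` on a finite domain:
`cor g = 2·Pr[g = 0] − 1 = (1/|α|) · Σ_x (−1)^{g x}`. -/
noncomputable def cor {α : Type*} [Fintype α] (g : α → ZMod 2) : ℝ :=
  (∑ x : α, (-1 : ℝ) ^ (g x).val) / (Fintype.card α : ℝ)

/-- The canonical inner product `a·x = ⊕ᵢ aᵢ xᵢ` on `F₂^n`. -/
def ip {n : ℕ} (a x : Fin n → ZMod 2) : ZMod 2 := ∑ i, a i * x i

/-!
Fix `x₂` and let `S x₂` be the unnormalised correlation over `(x₁, x₃)`. Adding the mask `d` on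
`x₂` turns the full correlation into the Walsh–Hadamard transform of `S` at `d`, divided by the
size of the domain, so the identity is Parseval's identity for the Walsh–Hadamard transform on
`F₂^{m₂}`.
-/

open Finset

noncomputable def signChar : AddChar (ZMod 2) ℝ :=
  AddChar.zmodChar 2 (by norm_num : (-1 : ℝ) ^ 2 = 1)

lemma cor_eq_sum_signChar {α : Type*} [Fintype α] (g : α → ZMod 2) :
    cor g = (∑ x, signChar (g x)) / Fintype.card α :=
  rfl

lemma cor_const_add {α : Type*} [Fintype α] (u : ZMod 2) (g : α → ZMod 2) :
    cor (fun x => u + g x) = signChar u * cor g := by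
  simp only [cor_eq_sum_signChar, AddChar.map_add_eq_mul, ← mul_sum, mul_div_assoc]

lemma cor_prod_eq_sum_cor_slice {α β γ : Type*} [Fintype α] [Fintype β] [Fintype γ]
    (g : α × β × γ → ZMod 2) :
    cor g = (∑ y, cor (fun q : α × γ => g (q.1, y, q.2))) / Fintype.card β := by
  have hsum : ∑ p, signChar (g p) = ∑ y, ∑ q : α × γ, signChar (g (q.1, y, q.2)) := by
    simp only [Fintype.sum_prod_type]
    exact sum_comm
  simp only [cor_eq_sum_signChar, hsum, ← sum_div, div_div, Fintype.card_prod, Nat.cast_mul]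
  ring

lemma ip_add_left {n : ℕ} (d d' z : Fin n → ZMod 2) : ip (d + d') z = ip d z + ip d' z :=
  add_dotProduct d d' z

lemma ip_add_right {n : ℕ} (d z z' : Fin n → ZMod 2) : ip d (z + z') = ip d z + ip d z' :=
  dotProduct_add d z z'

lemma sum_signChar_ip {n : ℕ} (z : Fin n → ZMod 2) :
    ∑ d, signChar (ip d z) = if z = 0 then 2 ^ n else 0 := by
  split_ifs with hz
  · simp [hz, ip]
  · let ψ : AddChar (Fin n → ZMod 2) ℝ :=
      signChar.compAddMonoidHom (AddMonoidHom.mk' (ip · z) fun d d' => ip_add_left d d' z)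
    obtain ⟨i, hi⟩ := Function.ne_iff.mp hz
    have hzi : z i = 1 := (by decide : ∀ t : ZMod 2, t ≠ 0 → t = 1) _ hi
    have hψ : ψ ≠ 1 := AddChar.ne_one_iff.mpr ⟨Pi.single i 1, by
      change signChar (Pi.single i 1 ⬝ᵥ z) ≠ 1
      rw [single_dotProduct, hzi, one_mul]
      norm_num [signChar, AddChar.zmodChar_apply, ZMod.val_one]⟩
    exact AddChar.sum_eq_zero_of_ne_one hψ

lemma add_eq_zero_iff_eq_of_zmod_two {n : ℕ} {x y : Fin n → ZMod 2} : x + y = 0 ↔ x = y := by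
  rw [add_eq_zero_iff_eq_neg, show -y = y from funext fun i => ZMod.neg_eq_self_mod_two (y i)]

lemma sum_sq_walsh_eq {n : ℕ} (S : (Fin n → ZMod 2) → ℝ) :
    ∑ d, (∑ x, signChar (ip d x) * S x) ^ 2 = 2 ^ n * ∑ x, S x ^ 2 := by
  calc ∑ d, (∑ x, signChar (ip d x) * S x) ^ 2
      = ∑ x, ∑ y, (∑ d, signChar (ip d (x + y))) * (S x * S y) := by
        simp only [sq, sum_mul_sum]
        simp only [ip_add_right, AddChar.map_add_eq_mul, sum_mul]
        rw [sum_comm]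
        refine sum_congr rfl fun x _ => ?_
        rw [sum_comm]
        exact sum_congr rfl fun y _ => sum_congr rfl fun d _ => by ring
    _ = 2 ^ n * ∑ x, S x ^ 2 := by
        -- by orthogonality only the diagonal `y = x` survives, since `x + y = 0 ↔ x = y` over `F₂`
        simp [sum_signChar_ip, add_eq_zero_iff_eq_of_zmod_two, mul_sum, sq]

theorem sum_sq_cor_slice_eq {α γ : Type*} [Fintype α] [Fintype γ] {n : ℕ}
    (h : α → (Fin n → ZMod 2) → γ → ZMod 2) :
    ∑ y, cor (fun q : α × γ => h q.1 y q.2) ^ 2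
      = 2 ^ n * ∑ d, cor (fun p : α × (Fin n → ZMod 2) × γ =>
          ip d p.2.1 + h p.1 p.2.1 p.2.2) ^ 2 := by
  simp only [cor_prod_eq_sum_cor_slice, cor_const_add, div_pow, ← sum_div, sum_sq_walsh_eq,
    Fintype.card_fun, Fintype.card_fin, ZMod.card, Nat.cast_pow, Nat.cast_ofNat]
  field_simp

theorem statement1_general (m₁ m₂ m₃ m : ℕ)
    (f : (Fin m₁ → ZMod 2) → (Fin m₂ → ZMod 2) → (Fin m₃ → ZMod 2) → (Fin m → ZMod 2))
    (a : Fin m₁ → ZMod 2) (c : Fin m₃ → ZMod 2) (b : Fin m → ZMod 2) :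
    ∑ x₂ : Fin m₂ → ZMod 2,
        (cor (fun p : (Fin m₁ → ZMod 2) × (Fin m₃ → ZMod 2) =>
          ip a p.1 + ip c p.2 + ip b (f p.1 x₂ p.2))) ^ 2
      = 2 ^ m₂ *
        ∑ d : Fin m₂ → ZMod 2,
          (cor (fun p : (Fin m₁ → ZMod 2) × (Fin m₂ → ZMod 2) × (Fin m₃ → ZMod 2) =>
            ip a p.1 + ip d p.2.1 + ip c p.2.2 + ip b (f p.1 p.2.1 p.2.2))) ^ 2 := by
  rw [sum_sq_cor_slice_eq fun x₁ x₂ x₃ => ip a x₁ + ip c x₃ + ip b (f x₁ x₂ x₃)]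
  congr! 5 with d p
  ring

/-- Theorem 2.2:
For a vectorial Boolean function `f : F₂^{m₁} × F₂^{m₂} × F₂^{m₃} → F₂^m`, any masks
`a ∈ F₂^{m₁}`, `c ∈ F₂^{m₃}` and nonzero `b ∈ F₂^m`,
`Σ_{x₂} cor_{x₁,x₃}²(a·x₁ ⊕ c·x₃ ⊕ b·f(x₁,x₂,x₃))
   = 2^{m₂} · Σ_{d} cor_{x₁,x₂,x₃}²(a·x₁ ⊕ d·x₂ ⊕ c·x₃ ⊕ b·f(x₁,x₂,x₃))`. -/
theorem statement1 (m₁ m₂ m₃ m : ℕ) (hm₁ : 0 < m₁) (hm₂ : 0 < m₂) (hm₃ : 0 < m₃)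
    (hm : 0 < m)
    (f : (Fin m₁ → ZMod 2) → (Fin m₂ → ZMod 2) → (Fin m₃ → ZMod 2) → (Fin m → ZMod 2))
    (a : Fin m₁ → ZMod 2) (c : Fin m₃ → ZMod 2) (b : Fin m → ZMod 2) (hb : b ≠ 0) :
    ∑ x₂ : Fin m₂ → ZMod 2,
        (cor (fun p : (Fin m₁ → ZMod 2) × (Fin m₃ → ZMod 2) =>
          ip a p.1 + ip c p.2 + ip b (f p.1 x₂ p.2))) ^ 2
      = 2 ^ m₂ *
        ∑ d : Fin m₂ → ZMod 2,
          (cor (fun p : (Fin m₁ → ZMod 2) × (Fin m₂ → ZMod 2) × (Fin m₃ → ZMod 2) =>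
            ip a p.1 + ip d p.2.1 + ip c p.2.2 + ip b (f p.1 p.2.1 p.2.2))) ^ 2 :=
  statement1_general m₁ m₂ m₃ m f a c b
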